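/- For complex q with |q| < 1, sum_{n=0}^{infinity} [(q;q^2)_n (-q)^n / ((-q;q^2)_n (1+q^{2n}))] * [(-q;q)_{2n} / (q;q)_{2n}] = (1/2) * (q;q^2)_infinity / (-q;q^2)_infinity. -/

import Mathlib

/-!
Using `(-q;q)_{2n} = (-q;q²)_n (-q²;q²)_n`, `(q;q)_{2n} = (q;q²)_n (q²;q²)_n` and
`(-1;Q)_n (1 + Qⁿ) = 2 (-Q;Q)_n`, the summand becomes `½ (-1;q²)_n / (q²;q²)_n · (-q)ⁿ`, so the
identity is the q-binomial theorem `∑ (a;Q)_n / (Q;Q)_n zⁿ = (az;Q)_∞ / (z;Q)_∞` at `Q = q²`,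
`a = -1`, `z = -q`. Its left side `F` satisfies `(1 - z) F z = (1 - a z) F (Q z)`; iterating gives
`F z · (z;Q)_N = (az;Q)_N · F (Q^N z)`, and `F (Q^N z) → F 0 = 1` by dominated convergence.
-/

/-- `(A;q)_n` -/
noncomputable def qp (q a : ℂ) (n : ℕ) : ℂ :=
  ∏ k ∈ Finset.range n, (1 - a * q ^ k)

/-- `(A;q)_∞` -/
noncomputable def qpinf (q a : ℂ) : ℂ := ∏' k : ℕ, (1 - a * q ^ k)

open Filter Topology

lemma qp_zero (q a : ℂ) : qp q a 0 = 1 := Finset.prod_range_zero _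

lemma qp_succ (q a : ℂ) (n : ℕ) : qp q a (n + 1) = qp q a n * (1 - a * q ^ n) :=
  Finset.prod_range_succ _ n

lemma qp_two_mul (q a : ℂ) (n : ℕ) :
    qp q a (2 * n) = qp (q ^ 2) a n * qp (q ^ 2) (a * q) n := by
  induction n with
  | zero => simp [qp_zero]
  | succ n ih =>
    rw [show 2 * (n + 1) = 2 * n + 1 + 1 by ring, qp_succ, qp_succ, qp_succ, qp_succ, ih]
    ring

lemma qp_neg_one_mul_one_add_pow (Q : ℂ) (n : ℕ) :
    qp Q (-1) n * (1 + Q ^ n) = 2 * qp Q (-Q) n := by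
  induction n with
  | zero => norm_num [qp_zero]
  | succ n ih =>
    rw [qp_succ, qp_succ]
    linear_combination (1 + Q ^ (n + 1)) * ih

lemma one_sub_mul_pow_ne_zero {Q a : ℂ} (hQ : ‖Q‖ ≤ 1) (ha : ‖a‖ < 1) (k : ℕ) :
    1 - a * Q ^ k ≠ 0 := by
  refine sub_ne_zero.2 fun h => ?_
  have : ‖a * Q ^ k‖ < 1 := by
    rw [norm_mul, norm_pow]
    exact (mul_le_of_le_one_right (norm_nonneg a) (pow_le_one₀ (norm_nonneg Q) hQ)).trans_lt ha
  rw [← h, norm_one] at this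
  exact this.false

lemma qp_ne_zero {Q a : ℂ} (h : ∀ k, 1 - a * Q ^ k ≠ 0) (n : ℕ) : qp Q a n ≠ 0 :=
  Finset.prod_ne_zero_iff.2 fun k _ => h k

lemma summable_norm_mul_pow {Q : ℂ} (hQ : ‖Q‖ < 1) (a : ℂ) :
    Summable fun k : ℕ => ‖-(a * Q ^ k)‖ := by
  simpa [norm_mul, norm_pow] using
    (summable_geometric_of_lt_one (norm_nonneg Q) hQ).mul_left ‖a‖

lemma multipliable_one_sub_mul_pow {Q : ℂ} (hQ : ‖Q‖ < 1) (a : ℂ) :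
    Multipliable fun k : ℕ => 1 - a * Q ^ k := by
  simpa [sub_eq_add_neg] using multipliable_one_add_of_summable (summable_norm_mul_pow hQ a)

lemma tendsto_qp_qpinf {Q : ℂ} (hQ : ‖Q‖ < 1) (a : ℂ) :
    Tendsto (qp Q a) atTop (𝓝 (qpinf Q a)) :=
  (multipliable_one_sub_mul_pow hQ a).tendsto_prod_tprod_nat

lemma qpinf_ne_zero {Q a : ℂ} (hQ : ‖Q‖ < 1) (h : ∀ k, 1 - a * Q ^ k ≠ 0) : qpinf Q a ≠ 0 := by
  simpa [qpinf, sub_eq_add_neg] using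
    tprod_one_add_ne_zero_of_summable (by simpa [sub_eq_add_neg] using h)
      (summable_norm_mul_pow hQ a)

lemma norm_pow_mul_lt_one {Q : ℂ} (hQ : ‖Q‖ < 1) {z : ℂ} (hz : ‖z‖ < 1) (N : ℕ) :
    ‖Q ^ N * z‖ < 1 := by
  rw [norm_mul, norm_pow]
  exact (mul_le_of_le_one_left (norm_nonneg z) (pow_le_one₀ (norm_nonneg Q) hQ.le)).trans_lt hz

noncomputable def qbinomCoeff (Q a : ℂ) (n : ℕ) : ℂ := qp Q a n / qp Q Q n

lemma qbinomCoeff_zero (Q a : ℂ) : qbinomCoeff Q a 0 = 1 := by simp [qbinomCoeff, qp_zero]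

lemma one_sub_pow_mul_qbinomCoeff_succ {Q : ℂ} (hQ : ‖Q‖ < 1) (a : ℂ) (n : ℕ) :
    (1 - Q ^ (n + 1)) * qbinomCoeff Q a (n + 1) = (1 - a * Q ^ n) * qbinomCoeff Q a n := by
  have hQQ := qp_ne_zero (one_sub_mul_pow_ne_zero hQ.le hQ) n
  have hfactor := one_sub_mul_pow_ne_zero hQ.le hQ n
  rw [qbinomCoeff, qbinomCoeff, qp_succ, qp_succ, pow_succ']
  field_simp

lemma norm_qbinomCoeff_succ_le {Q : ℂ} (hQ : ‖Q‖ < 1) (a : ℂ) (n : ℕ) :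
    ‖qbinomCoeff Q a (n + 1)‖ ≤
      (1 + ‖a‖ * ‖Q‖ ^ n) / (1 - ‖Q‖ ^ (n + 1)) * ‖qbinomCoeff Q a n‖ := by
  have hpos : 0 < 1 - ‖Q‖ ^ (n + 1) := sub_pos.2 (pow_lt_one₀ (norm_nonneg Q) hQ n.succ_ne_zero)
  have hden : 1 - ‖Q‖ ^ (n + 1) ≤ ‖1 - Q ^ (n + 1)‖ := by
    simpa using norm_sub_norm_le (1 : ℂ) (Q ^ (n + 1))
  have hnum : ‖1 - a * Q ^ n‖ ≤ 1 + ‖a‖ * ‖Q‖ ^ n := by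
    simpa using norm_sub_le (1 : ℂ) (a * Q ^ n)
  have hrec := congrArg norm (one_sub_pow_mul_qbinomCoeff_succ hQ a n)
  rw [norm_mul, norm_mul] at hrec
  rw [div_mul_eq_mul_div, le_div_iff₀ hpos]
  calc ‖qbinomCoeff Q a (n + 1)‖ * (1 - ‖Q‖ ^ (n + 1))
      ≤ ‖1 - Q ^ (n + 1)‖ * ‖qbinomCoeff Q a (n + 1)‖ := by
        rw [mul_comm]; gcongr
    _ ≤ (1 + ‖a‖ * ‖Q‖ ^ n) * ‖qbinomCoeff Q a n‖ := by rw [hrec]; gcongr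

lemma summable_norm_qbinomCoeff_mul_pow {Q : ℂ} (hQ : ‖Q‖ < 1) (a : ℂ) {z : ℂ} (hz : ‖z‖ < 1) :
    Summable fun n => ‖qbinomCoeff Q a n * z ^ n‖ := by
  set ratio : ℕ → ℝ := fun n => (1 + ‖a‖ * ‖Q‖ ^ n) / (1 - ‖Q‖ ^ (n + 1)) * ‖z‖
  have hQpow : Tendsto (fun n : ℕ => ‖Q‖ ^ n) atTop (𝓝 0) :=
    tendsto_pow_atTop_nhds_zero_of_lt_one (norm_nonneg Q) hQ
  have hratio : Tendsto ratio atTop (𝓝 ‖z‖) := by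
    simpa [ratio] using (((hQpow.const_mul ‖a‖).const_add 1).div
      ((hQpow.comp (tendsto_add_atTop_nat 1)).const_sub 1) (by norm_num)).mul_const ‖z‖
  refine summable_of_ratio_norm_eventually_le (r := (1 + ‖z‖) / 2) (by linarith) ?_
  filter_upwards [hratio.eventually_le_const (by linarith : ‖z‖ < (1 + ‖z‖) / 2)] with n hn
  calc ‖‖qbinomCoeff Q a (n + 1) * z ^ (n + 1)‖‖
      = ‖qbinomCoeff Q a (n + 1)‖ * ‖z‖ ^ (n + 1) := by simp
    _ ≤ ratio n * (‖qbinomCoeff Q a n‖ * ‖z‖ ^ n) := by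
        rw [pow_succ]
        have hcoeff := norm_qbinomCoeff_succ_le hQ a n
        simp only [ratio]
        calc _ ≤ (1 + ‖a‖ * ‖Q‖ ^ n) / (1 - ‖Q‖ ^ (n + 1)) * ‖qbinomCoeff Q a n‖ *
              (‖z‖ ^ n * ‖z‖) := by gcongr
          _ = _ := by ring
    _ ≤ (1 + ‖z‖) / 2 * ‖‖qbinomCoeff Q a n * z ^ n‖‖ := by
        simp only [norm_norm, norm_mul, norm_pow]; gcongr

lemma summable_qbinomCoeff_mul_pow {Q : ℂ} (hQ : ‖Q‖ < 1) (a : ℂ) {z : ℂ} (hz : ‖z‖ < 1) :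
    Summable fun n => qbinomCoeff Q a n * z ^ n :=
  (summable_norm_qbinomCoeff_mul_pow hQ a hz).of_norm

lemma one_sub_mul_tsum_qbinomCoeff {Q : ℂ} (hQ : ‖Q‖ < 1) (a : ℂ) {z : ℂ} (hz : ‖z‖ < 1) :
    (1 - z) * ∑' n, qbinomCoeff Q a n * z ^ n =
      (1 - a * z) * ∑' n, qbinomCoeff Q a n * (Q * z) ^ n := by
  have hQz : ‖Q * z‖ < 1 := by simpa using norm_pow_mul_lt_one hQ hz 1
  have hF := summable_qbinomCoeff_mul_pow hQ a hz
  have hFQ := summable_qbinomCoeff_mul_pow hQ a hQz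
  -- Comparing coefficients of `z ^ (n + 1)` in `F z - F (Q z) = z (F z - a F (Q z))`.
  have hdiff : ∑' n, (qbinomCoeff Q a n * z ^ n - qbinomCoeff Q a n * (Q * z) ^ n) =
      ∑' n, (qbinomCoeff Q a n * z ^ n * z - a * (qbinomCoeff Q a n * (Q * z) ^ n) * z) := by
    rw [(hF.sub hFQ).tsum_eq_zero_add]
    simp only [pow_zero, mul_one, sub_self, zero_add]
    exact tsum_congr fun n => by
      linear_combination z ^ (n + 1) * one_sub_pow_mul_qbinomCoeff_succ hQ a n
  rw [hF.tsum_sub hFQ, (hF.mul_right z).tsum_sub ((hFQ.mul_left a).mul_right z),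
    tsum_mul_right, tsum_mul_right, tsum_mul_left] at hdiff
  linear_combination hdiff

lemma tsum_qbinomCoeff_mul_qp {Q : ℂ} (hQ : ‖Q‖ < 1) (a : ℂ) {z : ℂ} (hz : ‖z‖ < 1) (N : ℕ) :
    (∑' n, qbinomCoeff Q a n * z ^ n) * qp Q z N =
      qp Q (a * z) N * ∑' n, qbinomCoeff Q a n * (Q ^ N * z) ^ n := by
  induction N with
  | zero => simp [qp_zero]
  | succ N ih =>
    have hstep := one_sub_mul_tsum_qbinomCoeff hQ a (norm_pow_mul_lt_one hQ hz N)
    rw [← mul_assoc Q, ← pow_succ'] at hstep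
    rw [qp_succ, qp_succ]
    linear_combination (1 - z * Q ^ N) * ih + qp Q (a * z) N * hstep

lemma tendsto_tsum_qbinomCoeff_mul_pow_mul {Q : ℂ} (hQ : ‖Q‖ < 1) (a : ℂ) {z : ℂ}
    (hz : ‖z‖ < 1) :
    Tendsto (fun N : ℕ => ∑' n, qbinomCoeff Q a n * (Q ^ N * z) ^ n) atTop (𝓝 1) := by
  have hlim : Tendsto (fun N : ℕ => Q ^ N * z) atTop (𝓝 0) := by
    simpa using (tendsto_pow_atTop_nhds_zero_of_norm_lt_one hQ).mul_const z
  have hsum := tendsto_tsum_of_dominated_convergence (g := fun n => qbinomCoeff Q a n * 0 ^ n)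
    (summable_norm_qbinomCoeff_mul_pow hQ a hz)
    (fun n => (hlim.pow n).const_mul (qbinomCoeff Q a n))
    (Eventually.of_forall fun N n => by
      simp only [norm_mul, norm_pow]
      gcongr
      exact mul_le_of_le_one_left (norm_nonneg z) (pow_le_one₀ (norm_nonneg Q) hQ.le))
  rwa [tsum_eq_single 0 fun n hn => by simp [hn], pow_zero, mul_one, qbinomCoeff_zero] at hsum

theorem tsum_qbinomCoeff_mul_pow_mul_qpinf {Q : ℂ} (hQ : ‖Q‖ < 1) (a : ℂ) {z : ℂ}
    (hz : ‖z‖ < 1) :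
    (∑' n, qbinomCoeff Q a n * z ^ n) * qpinf Q z = qpinf Q (a * z) := by
  have hlhs := (tendsto_qp_qpinf hQ z).const_mul (∑' n, qbinomCoeff Q a n * z ^ n)
  have hrhs := (tendsto_qp_qpinf hQ (a * z)).mul (tendsto_tsum_qbinomCoeff_mul_pow_mul hQ a hz)
  rw [mul_one] at hrhs
  exact tendsto_nhds_unique (hlhs.congr (tsum_qbinomCoeff_mul_qp hQ a hz)) hrhs

lemma one_add_pow_ne_zero {Q : ℂ} (hQ : ‖Q‖ < 1) (n : ℕ) : 1 + Q ^ n ≠ 0 := by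
  rcases n.eq_zero_or_pos with rfl | hn
  · norm_num
  intro h
  have := congrArg norm (eq_neg_of_add_eq_zero_right h)
  rw [norm_neg, norm_one, norm_pow] at this
  exact (pow_lt_one₀ (norm_nonneg Q) hQ hn.ne').ne this

lemma A_q_eval_summand_eq {q : ℂ} (hq : ‖q‖ < 1) (n : ℕ) :
    qp (q ^ 2) q n * (-q) ^ n / (qp (q ^ 2) (-q) n * (1 + q ^ (2 * n))) *
        (qp q (-q) (2 * n) / qp q q (2 * n)) =
      1 / 2 * (qbinomCoeff (q ^ 2) (-1) n * (-q) ^ n) := by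
  have hQ : ‖q ^ 2‖ < 1 := by rw [norm_pow]; exact pow_lt_one₀ (norm_nonneg q) hq two_ne_zero
  have hqp_pos := qp_ne_zero (one_sub_mul_pow_ne_zero hQ.le hq) n
  have hqp_neg := qp_ne_zero (one_sub_mul_pow_ne_zero hQ.le (by rwa [norm_neg] : ‖-q‖ < 1)) n
  have hqp_Q := qp_ne_zero (one_sub_mul_pow_ne_zero hQ.le hQ) n
  have hone_add := one_add_pow_ne_zero hQ n
  have hhalf := qp_neg_one_mul_one_add_pow (q ^ 2) n
  rw [qp_two_mul, qp_two_mul, pow_mul, qbinomCoeff]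
  field_simp
  linear_combination -(-q) ^ n * hhalf

theorem A_q_eval (q : ℂ) (hq : ‖q‖ < 1) :
    ∑' n : ℕ, qp (q ^ 2) q n * (-q) ^ n / (qp (q ^ 2) (-q) n * (1 + q ^ (2 * n))) *
        (qp q (-q) (2 * n) / qp q q (2 * n)) =
      (1 / 2) * qpinf (q ^ 2) q / qpinf (q ^ 2) (-q) := by
  have hQ : ‖q ^ 2‖ < 1 := by rw [norm_pow]; exact pow_lt_one₀ (norm_nonneg q) hq two_ne_zero
  have hz : ‖-q‖ < 1 := by rwa [norm_neg]
  have hbinom := tsum_qbinomCoeff_mul_pow_mul_qpinf hQ (-1) hz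
  rw [neg_one_mul, neg_neg] at hbinom
  rw [tsum_congr (A_q_eval_summand_eq hq), tsum_mul_left,
    eq_div_iff (qpinf_ne_zero hQ (one_sub_mul_pow_ne_zero hQ.le hz)), ← hbinom]
  ring
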